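/- For every t with 0 < t < 1/2 and every z ∈ ℂ with Im z ≥ −t and z ≠ −ti, the analytic extension of the Meixner Cauchy transform has no zero: Φ_t(z) := 1/(z + ti) + (it/(z + ti))·G_{t+1/2}(z + i/2) ≠ 0. -/

import Mathlib

open MeasureTheory

/-- The density of the symmetric Meixner distribution `ρ_s`. -/
noncomputable def meixnerDensity (s x : ℝ) : ℝ :=
  (4 : ℝ) ^ s / (2 * Real.pi * Real.Gamma (2 * s)) *
    ‖Complex.Gamma ((s : ℂ) + (x : ℂ) * Complex.I)‖ ^ 2

/-- The analytic extension `Φ_t(z) = 1/(z+ti) + (it/(z+ti))·G_{t+1/2}(z + i/2)` of the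
Cauchy transform of the symmetric Meixner distribution `ρ_t`. -/
noncomputable def meixnerPhi (t : ℝ) (z : ℂ) : ℂ :=
  1 / (z + (t : ℂ) * Complex.I) +
    (Complex.I * (t : ℂ) / (z + (t : ℂ) * Complex.I)) *
      ∫ u : ℝ, (meixnerDensity (t + 1 / 2) u : ℂ) / ((z + Complex.I / 2) - (u : ℂ))

/-!
Clearing the denominator, `(z + ti) Φ_t(z) = 1 + it G`, where `G` is the Cauchy transform of
`ρ_{t+1/2}` at `z + i/2`. Since `Im (z + i/2) ≥ 1/2 - t > 0` and the density is nonnegative,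
`Im G ≤ 0`, so `Re (1 + it G) = 1 - t Im G ≥ 1`.
-/

open Complex

lemma meixnerDensity_nonneg {s : ℝ} (hs : 0 < s) (x : ℝ) : 0 ≤ meixnerDensity s x := by
  have := Real.Gamma_pos_of_pos (by linarith : 0 < 2 * s)
  unfold meixnerDensity
  positivity

lemma im_ofReal_div_nonpos {a : ℝ} (ha : 0 ≤ a) {w : ℂ} (hw : 0 ≤ w.im) :
    ((a : ℂ) / w).im ≤ 0 := by
  rw [div_eq_mul_inv, im_ofReal_mul, inv_im, neg_div]
  exact mul_nonpos_of_nonneg_of_nonpos ha (neg_nonpos.mpr (div_nonneg hw (normSq_nonneg w)))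

lemma im_integral_ofReal_div_sub_nonpos {μ : Measure ℝ} {p : ℝ → ℝ} (hp : ∀ u, 0 ≤ p u)
    {w : ℂ} (hw : 0 ≤ w.im) : (∫ u, (p u : ℂ) / (w - u) ∂μ).im ≤ 0 := by
  by_cases hint : Integrable (fun u => (p u : ℂ) / (w - u)) μ
  · rw [← RCLike.im_eq_complex_im, ← integral_im hint]
    exact integral_nonpos fun u => im_ofReal_div_nonpos (hp u) (by simpa using hw)
  · simp [integral_undef hint]

/-- For `0 < t < 1/2`, the analytic extension of the Meixner Cauchy transform has no zero
in the closed half-plane `{Im z ≥ −t}` away from the pole `−ti`. -/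
theorem meixner_extension_ne_zero (t : ℝ) (ht0 : 0 < t) (ht : t < 1 / 2)
    (z : ℂ) (hz : -t ≤ z.im) (hz' : z ≠ -(t : ℂ) * Complex.I) :
    meixnerPhi t z ≠ 0 := by
  set G := ∫ u : ℝ, (meixnerDensity (t + 1 / 2) u : ℂ) / ((z + I / 2) - (u : ℂ))
  have hpole : z + t * I ≠ 0 := fun h => hz' (by linear_combination h)
  have hG : G.im ≤ 0 :=
    im_integral_ofReal_div_sub_nonpos (meixnerDensity_nonneg (by linarith))
      (by simp only [add_im, div_ofNat_im, I_im]; linarith)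
  have hnum : 1 + I * t * G ≠ 0 := by
    have hre : (1 + I * t * G).re = 1 - t * G.im := by
      simp [sub_eq_add_neg]
    intro h
    rw [h, zero_re] at hre
    nlinarith
  have hPhi : meixnerPhi t z = (1 + I * t * G) / (z + t * I) := by
    rw [meixnerPhi]
    ring
  rw [hPhi]
  exact div_ne_zero hnum hpole
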